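/- Let I ⊆ ℝ be an open interval, let γ : I → ℝ² be a C¹ curve parametrized by arc length with unit tangent τ(s) = γ'(s), and let n : I → ℝ² be a differentiable map of unit vectors with τ(s) = (−n₂(s), n₁(s)) and n'(s) = κ(s) τ(s) for a function κ : I → ℝ. Let v : ℝ² → ℝ² be C¹ with v(γ(s)) · n(s) = 0 for all s ∈ I, and let α : I → ℝ be any function. Then for each s ∈ I, the Navier boundary condition 2 (D(v)(γ(s)) n(s)) · τ(s) + α(s) (v(γ(s)) · τ(s)) = 0 holds if and only if ω(v)(γ(s)) = (2κ(s) − α(s)) (v(γ(s)) · τ(s)). -/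

import Mathlib

/-!
Write `A = Dv(γ(s))`. Differentiating the tangency condition `v(γ(t)) · n(t) = 0` and using
`n' = κ τ` gives `(A τ) · n = -κ (v · τ)`. Since `τ` is `n` rotated by a right angle and `|n| = 1`,
`(A n) · τ - (A τ) · n = ω(v)`. Hence `2 (D(v) n) · τ = (A n) · τ + (A τ) · n = ω(v) - 2κ (v · τ)`,
and the Navier condition becomes `ω(v) = (2κ - α) (v · τ)`.
-/

noncomputable section

/-- Dot product on `ℝ²` (realized as `Fin 2 → ℝ`). -/
def dot2 (u w : Fin 2 → ℝ) : ℝ := u 0 * w 0 + u 1 * w 1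

/-- Vorticity `ω(v)(x) = ∂₁v²(x) − ∂₂v¹(x)` (components indexed `0,1`). -/
def vort (v : (Fin 2 → ℝ) → Fin 2 → ℝ) (x : Fin 2 → ℝ) : ℝ :=
  fderiv ℝ v x (Pi.single 0 1) 1 - fderiv ℝ v x (Pi.single 1 1) 0

/-- Rate-of-strain tensor `D(v)(x) = ½(Dv(x) + Dv(x)ᵀ)`, acting on a vector `u`. -/
def strain (v : (Fin 2 → ℝ) → Fin 2 → ℝ) (x u : Fin 2 → ℝ) : Fin 2 → ℝ :=
  fun i => (1 / 2) * (fderiv ℝ v x u i + dot2 (fun j => fderiv ℝ v x (Pi.single i 1) j) u)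

open Topology

theorem dot2_smul_right (c : ℝ) (u w : Fin 2 → ℝ) : dot2 u (c • w) = c * dot2 u w := by
  simp only [dot2, Pi.smul_apply, smul_eq_mul]
  ring

theorem HasDerivAt.dot2 {f g : ℝ → Fin 2 → ℝ} {f' g' : Fin 2 → ℝ} {t : ℝ}
    (hf : HasDerivAt f f' t) (hg : HasDerivAt g g' t) :
    HasDerivAt (fun t => dot2 (f t) (g t)) (dot2 f' (g t) + dot2 (f t) g') t := by
  have hfi := fun i => hasDerivAt_pi.mp hf i
  have hgi := fun i => hasDerivAt_pi.mp hg i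
  unfold _root_.dot2
  exact (((hfi 0).mul (hgi 0)).add ((hfi 1).mul (hgi 1))).congr_deriv (by ring)

theorem map_eq_fin_two {M F : Type*} [AddCommGroup M] [Module ℝ M] [FunLike F (Fin 2 → ℝ) M]
    [LinearMapClass F ℝ (Fin 2 → ℝ) M] (L : F) (u : Fin 2 → ℝ) :
    L u = u 0 • L (Pi.single 0 1) + u 1 • L (Pi.single 1 1) := by
  conv_lhs => rw [pi_eq_sum_univ' u, Fin.sum_univ_two, map_add, map_smul, map_smul]

theorem two_mul_dot2_strain (v : (Fin 2 → ℝ) → Fin 2 → ℝ) (x u w : Fin 2 → ℝ) :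
    2 * dot2 (strain v x u) w = dot2 (fderiv ℝ v x u) w + dot2 (fderiv ℝ v x w) u := by
  simp only [strain, dot2, map_eq_fin_two (fderiv ℝ v x) w, Pi.add_apply, Pi.smul_apply,
    smul_eq_mul]
  ring

theorem vort_mul_dot2_self (v : (Fin 2 → ℝ) → Fin 2 → ℝ) (x u : Fin 2 → ℝ) :
    vort v x * dot2 u u =
      dot2 (fderiv ℝ v x u) ![-(u 1), u 0] - dot2 (fderiv ℝ v x ![-(u 1), u 0]) u := by
  simp only [vort, dot2, map_eq_fin_two (fderiv ℝ v x) u,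
    map_eq_fin_two (fderiv ℝ v x) ![-(u 1), u 0], Pi.add_apply, Pi.smul_apply, smul_eq_mul,
    Matrix.cons_val_zero, Matrix.cons_val_one]
  ring

theorem dot2_fderiv_add_mul_dot2_eq_zero_of_tangent {γ n : ℝ → Fin 2 → ℝ}
    {v : (Fin 2 → ℝ) → Fin 2 → ℝ} {T : Fin 2 → ℝ} {κ s : ℝ}
    (hv : DifferentiableAt ℝ v (γ s)) (hγ : HasDerivAt γ T s) (hn : HasDerivAt n (κ • T) s)
    (htang : ∀ᶠ t in 𝓝 s, dot2 (v (γ t)) (n t) = 0) :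
    dot2 (fderiv ℝ v (γ s) T) (n s) + κ * dot2 (v (γ s)) T = 0 := by
  have hderiv := (hv.hasFDerivAt.comp_hasDerivAt s hγ).dot2 hn
  rw [dot2_smul_right] at hderiv
  exact (hderiv.congr_of_eventuallyEq (htang.mono fun _ h => h.symm)).unique (hasDerivAt_const s 0)

theorem navier_iff_vorticity_general (a b : ℝ) (γ τ n : ℝ → Fin 2 → ℝ) (κ α : ℝ → ℝ)
    (v : (Fin 2 → ℝ) → Fin 2 → ℝ)
    (hγ : ∀ s ∈ Set.Ioo a b, HasDerivAt γ (τ s) s)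
    (hnunit : ∀ s ∈ Set.Ioo a b, dot2 (n s) (n s) = 1)
    (hτdef : ∀ s ∈ Set.Ioo a b, τ s = ![-(n s 1), n s 0])
    (hn' : ∀ s ∈ Set.Ioo a b, HasDerivAt n (κ s • τ s) s)
    (hv : ContDiff ℝ 1 v)
    (htang : ∀ s ∈ Set.Ioo a b, dot2 (v (γ s)) (n s) = 0) :
    ∀ s ∈ Set.Ioo a b,
      (2 * dot2 (strain v (γ s) (n s)) (τ s) + α s * dot2 (v (γ s)) (τ s) = 0 ↔
        vort v (γ s) = (2 * κ s - α s) * dot2 (v (γ s)) (τ s)) := by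
  intro s hs
  have hnormal := dot2_fderiv_add_mul_dot2_eq_zero_of_tangent
    (hv.differentiable one_ne_zero (γ s)) (hγ s hs) (hn' s hs)
    (Filter.eventually_of_mem (isOpen_Ioo.mem_nhds hs) htang)
  have hvort := vort_mul_dot2_self v (γ s) (n s)
  rw [hnunit s hs, mul_one, ← hτdef s hs] at hvort
  rw [two_mul_dot2_strain]
  constructor <;> intro h <;> linarith

/-- Along a `C¹` arc-length curve `γ` in the open interval `(a,b)`, with unit normal `n`,
positively-oriented tangent `τ = (−n₂, n₁) = γ'` and `n' = κ τ`, for a `C¹` vector field `v`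
tangent to the curve and any `α`, the Navier boundary condition
`2 (D(v) n) ⬝ τ + α (v ⬝ τ) = 0` holds at `γ(s)` iff `ω(v)(γ(s)) = (2κ(s) − α(s)) (v(γ(s)) ⬝ τ(s))`. -/
theorem navier_iff_vorticity (a b : ℝ) (γ τ n : ℝ → Fin 2 → ℝ) (κ α : ℝ → ℝ)
    (v : (Fin 2 → ℝ) → Fin 2 → ℝ)
    (hγ : ∀ s ∈ Set.Ioo a b, HasDerivAt γ (τ s) s)
    (hτcont : ContinuousOn τ (Set.Ioo a b))
    (hτunit : ∀ s ∈ Set.Ioo a b, dot2 (τ s) (τ s) = 1)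
    (hnunit : ∀ s ∈ Set.Ioo a b, dot2 (n s) (n s) = 1)
    (hτdef : ∀ s ∈ Set.Ioo a b, τ s = ![-(n s 1), n s 0])
    (hn' : ∀ s ∈ Set.Ioo a b, HasDerivAt n (κ s • τ s) s)
    (hv : ContDiff ℝ 1 v)
    (htang : ∀ s ∈ Set.Ioo a b, dot2 (v (γ s)) (n s) = 0) :
    ∀ s ∈ Set.Ioo a b,
      (2 * dot2 (strain v (γ s) (n s)) (τ s) + α s * dot2 (v (γ s)) (τ s) = 0 ↔
        vort v (γ s) = (2 * κ s - α s) * dot2 (v (γ s)) (τ s)) :=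
  navier_iff_vorticity_general a b γ τ n κ α v hγ hnunit hτdef hn' hv htang

end
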